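/- arXiv:1706.08854 — 3 statements merged into one kernel-verified Lean document; each statement's English description precedes it below -/
import Mathlib

section
/- Let n ≥ 2, let A = (a_{ij}) be a symmetric positive definite real n×n matrix, and let b = (b_i) ∈ ℝⁿ. For y ∈ ℝⁿ \ {0}, let g(y) be the n×n matrix with entries g_{ij} = ρ a_{ij} + ρ₀ b_i b_j + ρ₁ (b_i α_{y^j} + b_j α_{y^i}) − s ρ₁ α_{y^i} α_{y^j}, where α_{y^i} = (Ay)_i/α(y), ρ = φ(φ − sφ₂), ρ₀ = φφ₂₂ + (φ₂)², ρ₁ = (φ − sφ₂)φ₂ − sφφ₂₂, all evaluated at (b², s) with s = β(y)/α(y). Then det(g(y)) = φ^{n+1} (φ − sφ₂)^{n−2} (φ − sφ₂ + (b² − s²)φ₂₂) · det(A). -/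
open Matrix

noncomputable section

variable {n : ℕ}

/-- The Riemannian norm `α(y) = √(Σ aᵢⱼ yⁱ yʲ)`. -/
def alphaFn (A : Matrix (Fin n) (Fin n) ℝ) (y : Fin n → ℝ) : ℝ :=
  Real.sqrt (y ⬝ᵥ A.mulVec y)

/-- The 1-form `β(y) = Σ bᵢ yⁱ`. -/
def betaFn (b y : Fin n → ℝ) : ℝ := b ⬝ᵥ y

/-- `b² = Σ aⁱʲ bᵢ bⱼ`, the squared `α`-norm of `β`. -/
def bsq (A : Matrix (Fin n) (Fin n) ℝ) (b : Fin n → ℝ) : ℝ := b ⬝ᵥ A⁻¹.mulVec b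

/-- `φ₂`, the partial derivative of `φ` with respect to its second variable. -/
def phi2 (φ : ℝ → ℝ → ℝ) (t s : ℝ) : ℝ := deriv (φ t) s

/-- `φ₂₂`, the second partial derivative of `φ` with respect to its second variable. -/
def phi22 (φ : ℝ → ℝ → ℝ) (t s : ℝ) : ℝ := deriv (phi2 φ t) s

/-- The fundamental tensor `gᵢⱼ = ρ aᵢⱼ + ρ₀ bᵢbⱼ + ρ₁(bᵢ α_{yʲ} + bⱼ α_{yⁱ}) − s ρ₁ α_{yⁱ}α_{yʲ}`. -/
def gmat (A : Matrix (Fin n) (Fin n) ℝ) (b : Fin n → ℝ) (φ : ℝ → ℝ → ℝ)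
    (y : Fin n → ℝ) : Matrix (Fin n) (Fin n) ℝ :=
  Matrix.of fun i j =>
    let s := betaFn b y / alphaFn A y
    let t := bsq A b
    let p := φ t s
    let p2 := phi2 φ t s
    let p22 := phi22 φ t s
    let ρ := p * (p - s * p2)
    let ρ0 := p * p22 + p2 ^ 2
    let ρ1 := (p - s * p2) * p2 - s * p * p22
    let ay : Fin n → ℝ := fun k => A.mulVec y k / alphaFn A y
    ρ * A i j + ρ0 * b i * b j + ρ1 * (b i * ay j + b j * ay i)
      - s * ρ1 * ay i * ay j



/-- Key determinant lemma, nonzero scalar case. -/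
lemma det_smul_add_aux (hn : 2 ≤ n) (A : Matrix (Fin n) (Fin n) ℝ) (hA : IsUnit A.det)
    (U : Matrix (Fin n) (Fin 2) ℝ) (C : Matrix (Fin 2) (Fin 2) ℝ) (x : ℝ) (hx : x ≠ 0) :
    (x • A + U * C * Uᵀ).det = x ^ (n - 2) * A.det * (x • (1 : Matrix (Fin 2) (Fin 2) ℝ) + Uᵀ * A⁻¹ * U * C).det := by
  have hAinv : A * A⁻¹ = 1 := Matrix.mul_nonsing_inv A hA
  have h1 : x • A + U * C * Uᵀ = A * (x • (1 : Matrix (Fin n) (Fin n) ℝ) + A⁻¹ * (U * C * Uᵀ)) := by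
    rw [Matrix.mul_add, Matrix.mul_smul, Matrix.mul_one, ← Matrix.mul_assoc, hAinv, Matrix.one_mul]
  have h2 : (x • (1 : Matrix (Fin n) (Fin n) ℝ) + A⁻¹ * (U * C * Uᵀ))
      = x • ((1 : Matrix (Fin n) (Fin n) ℝ) + (x⁻¹ • (A⁻¹ * U * C)) * Uᵀ) := by
    rw [smul_add, Matrix.smul_mul, smul_smul, mul_inv_cancel₀ hx, one_smul]
    simp [Matrix.mul_assoc]
  have h3 : Uᵀ * (x⁻¹ • (A⁻¹ * U * C)) = x⁻¹ • (Uᵀ * A⁻¹ * U * C) := by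
    rw [Matrix.mul_smul, ← Matrix.mul_assoc, ← Matrix.mul_assoc]
  have h4 : x • ((1 : Matrix (Fin 2) (Fin 2) ℝ) + x⁻¹ • (Uᵀ * A⁻¹ * U * C))
      = x • (1 : Matrix (Fin 2) (Fin 2) ℝ) + Uᵀ * A⁻¹ * U * C := by
    rw [smul_add, smul_smul, mul_inv_cancel₀ hx, one_smul]
  have hpow : x ^ n = x ^ (n - 2) * x ^ 2 := by rw [← pow_add]; congr 1; omega
  calc (x • A + U * C * Uᵀ).det
      = A.det * (x • ((1 : Matrix (Fin n) (Fin n) ℝ) + (x⁻¹ • (A⁻¹ * U * C)) * Uᵀ)).det := by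
        rw [h1, h2, det_mul]
    _ = A.det * (x ^ n * ((1 : Matrix (Fin n) (Fin n) ℝ) + (x⁻¹ • (A⁻¹ * U * C)) * Uᵀ).det) := by
        rw [det_smul]; simp [Fintype.card_fin]
    _ = A.det * (x ^ n * ((1 : Matrix (Fin 2) (Fin 2) ℝ) + x⁻¹ • (Uᵀ * A⁻¹ * U * C)).det) := by
        rw [det_one_add_mul_comm, h3]
    _ = x ^ (n - 2) * A.det * (x • (1 : Matrix (Fin 2) (Fin 2) ℝ) + Uᵀ * A⁻¹ * U * C).det := by
        rw [← h4, det_smul, Fintype.card_fin, hpow]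
        field_simp

/-- Key determinant lemma, all scalars, by continuity. -/
lemma det_smul_add (hn : 2 ≤ n) (A : Matrix (Fin n) (Fin n) ℝ) (hA : IsUnit A.det)
    (U : Matrix (Fin n) (Fin 2) ℝ) (C : Matrix (Fin 2) (Fin 2) ℝ) (x : ℝ) :
    (x • A + U * C * Uᵀ).det = x ^ (n - 2) * A.det * (x • (1 : Matrix (Fin 2) (Fin 2) ℝ) + Uᵀ * A⁻¹ * U * C).det := by
  have hf : Continuous fun x : ℝ => (x • A + U * C * Uᵀ).det :=
    Continuous.matrix_det ((continuous_id.smul continuous_const).add continuous_const)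
  have hg : Continuous fun x : ℝ => x ^ (n - 2) * A.det *
      (x • (1 : Matrix (Fin 2) (Fin 2) ℝ) + Uᵀ * A⁻¹ * U * C).det :=
    ((continuous_pow _).mul continuous_const).mul
      (Continuous.matrix_det ((continuous_id.smul continuous_const).add continuous_const))
  have := Continuous.ext_on (dense_compl_singleton (0 : ℝ)) hf hg
    (fun z hz => det_smul_add_aux hn A hA U C z (Set.mem_compl_singleton_iff.mp hz))
  exact congrFun this x

theorem det_gmat (n : ℕ) (hn : 2 ≤ n) (A : Matrix (Fin n) (Fin n) ℝ)
    (hA : A.PosDef) (b : Fin n → ℝ) (φ : ℝ → ℝ → ℝ)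
    (hφ : ContDiff ℝ (⊤ : ℕ∞) (Function.uncurry φ))
    (y : Fin n → ℝ) (hy : y ≠ 0) :
    (gmat A b φ y).det =
      (let s := betaFn b y / alphaFn A y
       let t := bsq A b
       let p := φ t s
       let p2 := phi2 φ t s
       let p22 := phi22 φ t s
       p ^ (n + 1) * (p - s * p2) ^ (n - 2) * (p - s * p2 + (t - s ^ 2) * p22)
         * A.det) := by
  have hsym : Aᵀ = A := hA.1
  have hdet : IsUnit A.det := hA.det_pos.ne'.isUnit
  have hinv : A⁻¹ * A = 1 := Matrix.nonsing_inv_mul A hdet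
  set αv := alphaFn A y with hαdef
  have hq : 0 < y ⬝ᵥ A.mulVec y := by simpa using hA.dotProduct_mulVec_pos hy
  have hαpos : 0 < αv := Real.sqrt_pos.mpr hq
  have hαne : αv ≠ 0 := hαpos.ne'
  have hα2 : αv * αv = y ⬝ᵥ A.mulVec y := Real.mul_self_sqrt hq.le
  -- notation
  set s := betaFn b y / αv with hsdef
  set t := bsq A b with htdef
  set p := φ t s with hpdef
  set p2 := phi2 φ t s with hp2def
  set p22 := phi22 φ t s with hp22def
  set q := p - s * p2 with hqdef
  set ρ := p * q with hρdef
  set ρ0 := p * p22 + p2 ^ 2 with hρ0def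
  set ρ1 := q * p2 - s * p * p22 with hρ1def
  set w : Fin n → ℝ := fun k => A.mulVec y k / αv with hwdef
  set U : Matrix (Fin n) (Fin 2) ℝ := Matrix.of fun i k => ![b, w] k i with hUdef
  set C : Matrix (Fin 2) (Fin 2) ℝ := !![ρ0, ρ1; ρ1, -(s * ρ1)] with hCdef
  -- g = ρ • A + U C Uᵀ
  have hg : gmat A b φ y = ρ • A + U * C * Uᵀ := by
    ext i j
    simp only [gmat, Matrix.of_apply, Matrix.add_apply, Matrix.smul_apply, smul_eq_mul,
      Matrix.mul_apply, Matrix.transpose_apply, Fin.sum_univ_two, hUdef, hCdef,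
      Matrix.cons_val', Matrix.cons_val_zero, Matrix.cons_val_one, Matrix.head_cons,
      Matrix.empty_val', Matrix.cons_val_fin_one, Matrix.head_fin_const]
    ring
  -- A⁻¹ applied to vectors
  have hAiw : A⁻¹.mulVec w = αv⁻¹ • y := by
    have : w = αv⁻¹ • A.mulVec y := by
      funext k; simp [hwdef, div_eq_inv_mul, mul_comm]
    rw [this, Matrix.mulVec_smul, Matrix.mulVec_mulVec, hinv, Matrix.one_mulVec]
  have hbb : b ⬝ᵥ A⁻¹.mulVec b = t := rfl
  have hbw : b ⬝ᵥ A⁻¹.mulVec w = s := by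
    rw [hAiw, dotProduct_smul, hsdef]
    simp [betaFn, div_eq_inv_mul, mul_comm]
  have h3 : (A⁻¹)ᵀ = A⁻¹ := by rw [Matrix.transpose_nonsing_inv, hsym]
  have hwb : w ⬝ᵥ A⁻¹.mulVec b = s := by
    rw [Matrix.dotProduct_mulVec, ← Matrix.mulVec_transpose, h3, dotProduct_comm]
    exact hbw
  have hww : w ⬝ᵥ A⁻¹.mulVec w = 1 := by
    rw [hAiw, dotProduct_smul]
    have : w ⬝ᵥ y = αv := by
      have : w ⬝ᵥ y = αv⁻¹ * (A.mulVec y ⬝ᵥ y) := by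
        simp [hwdef, dotProduct, div_eq_inv_mul, Finset.mul_sum, mul_assoc]
      rw [this, dotProduct_comm, ← hα2]
      field_simp
    rw [smul_eq_mul, this, inv_mul_cancel₀ hαne]
  -- the 2×2 Gram matrix
  have hK : Uᵀ * A⁻¹ * U = !![t, s; s, 1] := by
    have hgen : ∀ k l, (Uᵀ * A⁻¹ * U) k l = (![b, w] k) ⬝ᵥ A⁻¹.mulVec (![b, w] l) := by
      intro k l
      simp [hUdef, Matrix.mul_apply, Matrix.mulVec, dotProduct, Finset.sum_mul,
        Finset.mul_sum]
      rw [Finset.sum_comm]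
      congr 1; funext i; congr 1; funext j; ring
    ext k l
    rw [hgen]
    fin_cases k <;> fin_cases l <;>
      simp [hbb, hbw, hwb, hww]
  rw [hg, det_smul_add hn A hdet U C ρ, hK]
  have hD : ((ρ • (1 : Matrix (Fin 2) (Fin 2) ℝ) + !![t, s; s, 1] * C)).det
      = p ^ 3 * (q + (t - s ^ 2) * p22) := by
    simp [Matrix.det_fin_two, Matrix.mul_apply, Fin.sum_univ_two, hCdef, Matrix.one_apply,
      hρdef, hρ0def, hρ1def, hqdef]
    ring
  rw [hD]
  simp only []
  have hpn : p ^ (n - 2) * p ^ 3 = p ^ (n + 1) := by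
    rw [← pow_add]; congr 1; omega
  rw [hρdef, mul_pow, ← hpn]
  ring
end
end

section
/- Let n ≥ 2, let A = (a_{ij}) be a symmetric positive definite real n×n matrix with inverse (a^{ij}), and let b = (b_i) ∈ ℝⁿ. Fix y ∈ ℝⁿ \ {0} and suppose that, at (b², s) with s = β(y)/α(y), one has φ > 0, φ − sφ₂ > 0, and φ − sφ₂ + (b² − s²)φ₂₂ > 0. Let g(y) be the matrix with entries g_{ij} = ρ a_{ij} + ρ₀ b_i b_j + ρ₁ (b_i α_{y^j} + b_j α_{y^i}) − s ρ₁ α_{y^i} α_{y^j}, where α_{y^i} = (Ay)_i/α(y), ρ = φ(φ − sφ₂), ρ₀ = φφ₂₂ + (φ₂)², ρ₁ = (φ − sφ₂)φ₂ − sφφ₂₂. Then g(y) is invertible and its inverse has entries g^{ij} = ρ^{−1} { a^{ij} + η b^i b^j + η₀ α^{−1} (b^i y^j + b^j y^i) + η₁ α^{−2} y^i y^j }, where b^i = Σ_j a^{ij} b_j, η = −φ₂₂ / (φ − sφ₂ + (b² − s²)φ₂₂), η₀ = −[(φ − sφ₂)φ₂ − sφφ₂₂] / (φ(φ − sφ₂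 + (b² − s²)φ₂₂)), and η₁ = (sφ + (b² − s²)φ₂)((φ − sφ₂)φ₂ − sφφ₂₂) / (φ²(φ − sφ₂ + (b² − s²)φ₂₂)). -/
open Matrix

noncomputable section

variable {n : ℕ}

lemma aux_mul_vecMulVec {n : ℕ} (M : Matrix (Fin n) (Fin n) ℝ) (u v : Fin n → ℝ) :
    M * vecMulVec u v = vecMulVec (M.mulVec u) v := by
  ext i j
  simp only [Matrix.mul_apply, vecMulVec_apply, Matrix.mulVec, dotProduct, Finset.sum_mul]
  exact Finset.sum_congr rfl fun k _ => by ring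

lemma aux_vecMulVec_mul {n : ℕ} (u v : Fin n → ℝ) (M : Matrix (Fin n) (Fin n) ℝ) :
    vecMulVec u v * M = vecMulVec u (vecMul v M) := by
  ext i j
  simp only [Matrix.mul_apply, vecMulVec_apply, Matrix.vecMul, dotProduct, Finset.mul_sum]
  exact Finset.sum_congr rfl fun k _ => by ring

lemma aux_vecMulVec_mul_vecMulVec {n : ℕ} (u v w x : Fin n → ℝ) :
    vecMulVec u v * vecMulVec w x = (v ⬝ᵥ w) • vecMulVec u x := by
  ext i j
  simp only [Matrix.mul_apply, vecMulVec_apply, Matrix.smul_apply, dotProduct, smul_eq_mul,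
    Finset.sum_mul]
  exact Finset.sum_congr rfl fun k _ => by ring

lemma aux_vecMulVec_mulVec {n : ℕ} (u v x : Fin n → ℝ) :
    Matrix.vecMulVec u v *ᵥ x = (v ⬝ᵥ x) • u := by
  funext i
  simp only [Matrix.mulVec, Matrix.vecMulVec_apply, dotProduct, Pi.smul_apply, smul_eq_mul,
    Finset.sum_mul]
  exact Finset.sum_congr rfl fun k _ => by ring

set_option maxHeartbeats 1000000 in
theorem gmat_inv (n : ℕ) (hn : 2 ≤ n) (A : Matrix (Fin n) (Fin n) ℝ)
    (hA : A.PosDef) (b : Fin n → ℝ) (φ : ℝ → ℝ → ℝ)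
    (hφ : ContDiff ℝ (⊤ : ℕ∞) (Function.uncurry φ))
    (y : Fin n → ℝ) (hy : y ≠ 0)
    (hpos1 : 0 < φ (bsq A b) (betaFn b y / alphaFn A y))
    (hpos2 : 0 < φ (bsq A b) (betaFn b y / alphaFn A y)
      - (betaFn b y / alphaFn A y) * phi2 φ (bsq A b) (betaFn b y / alphaFn A y))
    (hpos3 : 0 < φ (bsq A b) (betaFn b y / alphaFn A y)
      - (betaFn b y / alphaFn A y) * phi2 φ (bsq A b) (betaFn b y / alphaFn A y)
      + (bsq A b - (betaFn b y / alphaFn A y) ^ 2)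
        * phi22 φ (bsq A b) (betaFn b y / alphaFn A y)) :
    IsUnit (gmat A b φ y) ∧
    (gmat A b φ y)⁻¹ =
      (let s := betaFn b y / alphaFn A y
       let t := bsq A b
       let p := φ t s
       let p2 := phi2 φ t s
       let p22 := phi22 φ t s
       let ρ := p * (p - s * p2)
       let η := -p22 / (p - s * p2 + (t - s ^ 2) * p22)
       let η0 := -((p - s * p2) * p2 - s * p * p22)
         / (p * (p - s * p2 + (t - s ^ 2) * p22))
       let η1 := (s * p + (t - s ^ 2) * p2) * ((p - s * p2) * p2 - s * p * p22)
         / (p ^ 2 * (p - s * p2 + (t - s ^ 2) * p22))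
       let bu : Fin n → ℝ := A⁻¹.mulVec b
       Matrix.of fun i j =>
         ρ⁻¹ * (A⁻¹ i j + η * bu i * bu j
           + η0 * (alphaFn A y)⁻¹ * (bu i * y j + bu j * y i)
           + η1 * ((alphaFn A y) ^ 2)⁻¹ * y i * y j)) := by
  classical
  -- basic facts about A
  have hAT : Aᵀ = A := by
    have h := hA.1
    simpa [Matrix.IsHermitian, Matrix.conjTranspose_eq_transpose_of_trivial] using h
  have hdet : IsUnit A.det := hA.det_pos.ne'.isUnit
  have hinv : A⁻¹ * A = 1 := Matrix.nonsing_inv_mul A hdet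
  have hinv' : A * A⁻¹ = 1 := Matrix.mul_nonsing_inv A hdet
  have hAinvT : A⁻¹ᵀ = A⁻¹ := by
    rw [Matrix.transpose_nonsing_inv, hAT]
  -- abbreviations
  set α : ℝ := alphaFn A y with hαdef
  set s : ℝ := betaFn b y / α with hsdef
  set t : ℝ := bsq A b with htdef
  set p : ℝ := φ t s with hpdef
  set p2 : ℝ := phi2 φ t s with hp2def
  set p22 : ℝ := phi22 φ t s with hp22def
  set ρ : ℝ := p * (p - s * p2) with hρdef
  set ρ0 : ℝ := p * p22 + p2 ^ 2 with hρ0def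
  set ρ1 : ℝ := (p - s * p2) * p2 - s * p * p22 with hρ1def
  set η : ℝ := -p22 / (p - s * p2 + (t - s ^ 2) * p22) with hηdef
  set η0 : ℝ := -((p - s * p2) * p2 - s * p * p22)
    / (p * (p - s * p2 + (t - s ^ 2) * p22)) with hη0def
  set η1 : ℝ := (s * p + (t - s ^ 2) * p2) * ((p - s * p2) * p2 - s * p * p22)
    / (p ^ 2 * (p - s * p2 + (t - s ^ 2) * p22)) with hη1def
  set w : Fin n → ℝ := A.mulVec y with hwdef
  set bu : Fin n → ℝ := A⁻¹.mulVec b with hbudef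
  -- positivity
  have hyAy : 0 < y ⬝ᵥ w := by
    have := hA.dotProduct_mulVec_pos hy
    simpa [hwdef] using this
  have hα : 0 < α := by
    rw [hαdef]
    exact Real.sqrt_pos.2 hyAy
  have hα2 : α ^ 2 = y ⬝ᵥ w := by
    rw [hαdef, alphaFn, sq]
    exact Real.mul_self_sqrt hyAy.le
  have hp : 0 < p := hpos1
  have hq : 0 < p - s * p2 := hpos2
  have hD : 0 < p - s * p2 + (t - s ^ 2) * p22 := hpos3
  have hρ : ρ ≠ 0 := by rw [hρdef]; positivity
  -- vector identities
  have hAbu : A.mulVec bu = b := by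
    rw [hbudef, Matrix.mulVec_mulVec, hinv', Matrix.one_mulVec]
  have hbuA : Matrix.vecMul b A⁻¹ = bu := by
    rw [← hAinvT, Matrix.vecMul_transpose, hbudef]
  have hwA : Matrix.vecMul w A⁻¹ = y := by
    rw [← hAinvT, Matrix.vecMul_transpose, hwdef, Matrix.mulVec_mulVec, hinv,
      Matrix.one_mulVec]
  have hby : b ⬝ᵥ y = s * α := by
    rw [hsdef, betaFn, div_mul_cancel₀ _ hα.ne']
  have hbbu : b ⬝ᵥ bu = t := rfl
  have hwbu : w ⬝ᵥ bu = s * α := by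
    rw [dotProduct_comm, hwdef, Matrix.dotProduct_mulVec, ← hAT,
      Matrix.vecMul_transpose, hAbu, hby]
  have hwy : w ⬝ᵥ y = α ^ 2 := by
    rw [dotProduct_comm, hα2]
  -- the candidate inverse
  set G : Matrix (Fin n) (Fin n) ℝ := Matrix.of fun i j =>
    ρ⁻¹ * (A⁻¹ i j + η * bu i * bu j
      + η0 * α⁻¹ * (bu i * y j + bu j * y i)
      + η1 * (α ^ 2)⁻¹ * y i * y j) with hGdef
  have hG : G = ρ⁻¹ • (A⁻¹ + η • vecMulVec bu bu
      + (η0 * α⁻¹) • (vecMulVec bu y + vecMulVec y bu)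
      + (η1 * (α ^ 2)⁻¹) • vecMulVec y y) := by
    rw [hGdef]
    ext i j
    simp only [Matrix.of_apply, Matrix.smul_apply, Matrix.add_apply, vecMulVec_apply,
      smul_eq_mul]
    ring
  have hg : gmat A b φ y = ρ • A + ρ0 • vecMulVec b b
      + (ρ1 * α⁻¹) • (vecMulVec b w + vecMulVec w b)
      - (s * ρ1 * (α ^ 2)⁻¹) • vecMulVec w w := by
    ext i j
    simp only [gmat, Matrix.of_apply]
    simp only [← hαdef, ← hsdef, ← htdef, ← hpdef, ← hp2def, ← hp22def, ← hρdef, ← hρ0def,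
      ← hρ1def, ← hwdef]
    simp only [Matrix.smul_apply, Matrix.add_apply, Matrix.sub_apply, vecMulVec_apply,
      smul_eq_mul]
    field_simp
  have key : gmat A b φ y * G = 1 := by
    rw [hg, hG]
    simp only [Matrix.smul_mul, Matrix.mul_smul, Matrix.add_mul, Matrix.mul_add,
      Matrix.sub_mul, Matrix.mul_sub, smul_add, smul_sub, smul_smul,
      aux_mul_vecMulVec, aux_vecMulVec_mul, aux_vecMulVec_mul_vecMulVec,
      hAbu, hbuA, hwA, hbbu, hby, hwbu, hwy, hinv']
    ext i j
    simp only [Matrix.add_apply, Matrix.sub_apply, Matrix.smul_apply, Matrix.one_apply,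
      vecMulVec_apply, smul_eq_mul]
    simp only [aux_vecMulVec_mulVec, hbbu, hby, hwbu, hwy, ← hwdef, Pi.smul_apply,
      smul_eq_mul]
    have hαne : α ≠ 0 := hα.ne'
    have hρinv : ρ⁻¹ * ρ = 1 := inv_mul_cancel₀ hρ
    have e1 : ρ0 + η * ρ + η * ρ0 * t + η * (ρ1 * α⁻¹) * (s * α)
        + (η0 * α⁻¹) * ρ0 * (s * α) + (η0 * α⁻¹) * (ρ1 * α⁻¹) * α ^ 2 = 0 := by
      simp only [hηdef, hη0def, hρdef, hρ0def, hρ1def]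
      set D := p - s * p2 + (t - s ^ 2) * p22 with hDd
      have hDne : D ≠ 0 := hD.ne'
      field_simp
      rw [hDd]
      ring
    have e2 : ρ1 * α⁻¹ + (η0 * α⁻¹) * ρ + (η0 * α⁻¹) * ρ0 * t
        + (η0 * α⁻¹) * (ρ1 * α⁻¹) * (s * α) + (η1 * (α ^ 2)⁻¹) * ρ0 * (s * α)
        + (η1 * (α ^ 2)⁻¹) * (ρ1 * α⁻¹) * α ^ 2 = 0 := by
      simp only [hη0def, hη1def, hρdef, hρ0def, hρ1def]
      set D := p - s * p2 + (t - s ^ 2) * p22 with hDd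
      have hDne : D ≠ 0 := hD.ne'
      field_simp
      rw [hDd]
      ring
    have e3 : ρ1 * α⁻¹ + η * (ρ1 * α⁻¹) * t - η * (s * ρ1 * (α ^ 2)⁻¹) * (s * α)
        + (η0 * α⁻¹) * ρ + (η0 * α⁻¹) * (ρ1 * α⁻¹) * (s * α)
        - (η0 * α⁻¹) * (s * ρ1 * (α ^ 2)⁻¹) * α ^ 2 = 0 := by
      simp only [hηdef, hη0def, hρdef, hρ0def, hρ1def]
      set D := p - s * p2 + (t - s ^ 2) * p22 with hDd
      have hDne : D ≠ 0 := hD.ne'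
      field_simp
      rw [hDd]
      ring
    have e4 : -(s * ρ1 * (α ^ 2)⁻¹) + (η0 * α⁻¹) * (ρ1 * α⁻¹) * t
        - (η0 * α⁻¹) * (s * ρ1 * (α ^ 2)⁻¹) * (s * α) + (η1 * (α ^ 2)⁻¹) * ρ
        + (η1 * (α ^ 2)⁻¹) * (ρ1 * α⁻¹) * (s * α)
        - (η1 * (α ^ 2)⁻¹) * (s * ρ1 * (α ^ 2)⁻¹) * α ^ 2 = 0 := by
      simp only [hη0def, hη1def, hρdef, hρ0def, hρ1def]
      set D := p - s * p2 + (t - s ^ 2) * p22 with hDd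
      have hDne : D ≠ 0 := hD.ne'
      field_simp
      rw [hDd]
      ring
    linear_combination (if i = j then (1:ℝ) else 0) * hρinv
      + ρ⁻¹ * (b i * bu j) * e1 + ρ⁻¹ * (b i * y j) * e2
      + ρ⁻¹ * (w i * bu j) * e3 + ρ⁻¹ * (w i * y j) * e4
  refine ⟨(Matrix.isUnit_iff_isUnit_det _).2 (Matrix.isUnit_det_of_right_inverse key), ?_⟩
  rw [Matrix.inv_eq_right_inv key]
end
end

section
/- Suppose that for all real numbers s, b' with |s| ≤ b' ≤ ‖b‖ one has φ(b'², s) > 0, φ(b'², s) − sφ₂(b'², s) > 0, and φ(b'², s) − sφ₂(b'², s) + (b'² − s²)φ₂₂(b'², s) > 0, where ‖b‖ = √(b²). Then for every y ∈ ℝⁿ \ {0} and every index j, the partial derivative with respect to y^j of the function y ↦ ln √(det g(y)) equals (1/(2α)) { (n+1) φ₂/φ − (n−2) s φ₂₂/(φ − sφ₂) + ((b² − s²)φ₂₂₂ − 3sφ₂₂)/(φ − sφ₂ + (b² − s²)φ₂₂) } (b_j − s l_j), where l_j := (Ay)_j/α(y), g(y) is the matrix with entries g_{ij} = ρ a_{ij}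 + ρ₀ b_i b_j + ρ₁ (b_i α_{y^j} + b_j α_{y^i}) − s ρ₁ α_{y^i} α_{y^j} with α_{y^i} = (Ay)_i/α(y), ρ = φ(φ − sφ₂), ρ₀ = φφ₂₂ + (φ₂)², ρ₁ = (φ − sφ₂)φ₂ − sφφ₂₂, and all occurrences of φ and its derivatives are evaluated at (b², s) with s = β(y)/α(y). -/
open Matrix

noncomputable section

variable {n : ℕ}

/-- `φ₂₂₂`, the third partial derivative of `φ` with respect to its second variable. -/
def phi222 (φ : ℝ → ℝ → ℝ) (t s : ℝ) : ℝ := deriv (phi22 φ t) s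

/- ### Auxiliary lemmas -/

lemma MCT.herm_symm {n : ℕ} {A : Matrix (Fin n) (Fin n) ℝ} (h : A.IsHermitian) (i j : Fin n) :
    A i j = A j i := by
  conv_lhs => rw [← h]
  simp [Matrix.conjTranspose_apply]

lemma MCT.dot_symm {n : ℕ} {A : Matrix (Fin n) (Fin n) ℝ} (h : A.IsHermitian) (u v : Fin n → ℝ) :
    u ⬝ᵥ A.mulVec v = v ⬝ᵥ A.mulVec u := by
  simp only [dotProduct, Matrix.mulVec, Finset.mul_sum]
  rw [Finset.sum_comm]
  refine Finset.sum_congr rfl fun i _ => Finset.sum_congr rfl fun j _ => ?_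
  rw [MCT.herm_symm h j i]; ring

lemma MCT.cauchy {n : ℕ} {A : Matrix (Fin n) (Fin n) ℝ} (hA : A.PosDef) (b z : Fin n → ℝ) :
    (b ⬝ᵥ z) ^ 2 ≤ (b ⬝ᵥ A⁻¹.mulVec b) * (z ⬝ᵥ A.mulVec z) := by
  have hdet : IsUnit A.det := isUnit_iff_ne_zero.mpr hA.det_pos.ne'
  set c := A⁻¹.mulVec b with hc
  have hAc : A.mulVec c = b := by
    rw [hc, Matrix.mulVec_mulVec, Matrix.mul_nonsing_inv A hdet, Matrix.one_mulVec]
  have key : ∀ lam : ℝ, 0 ≤ (b ⬝ᵥ A⁻¹.mulVec b) * (lam * lam) + (-(2 * (b ⬝ᵥ z))) * lam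
      + z ⬝ᵥ A.mulVec z := by
    intro lam
    have h0 : 0 ≤ (z - lam • c) ⬝ᵥ A.mulVec (z - lam • c) := hA.posSemidef.dotProduct_mulVec_nonneg _
    have expand : (z - lam • c) ⬝ᵥ A.mulVec (z - lam • c)
        = z ⬝ᵥ A.mulVec z - 2 * lam * (b ⬝ᵥ z) + lam * lam * (b ⬝ᵥ A⁻¹.mulVec b) := by
      have h1 : c ⬝ᵥ A.mulVec z = b ⬝ᵥ z := by
        rw [MCT.dot_symm hA.1 c z, hAc, dotProduct_comm]
      have h3 : c ⬝ᵥ b = b ⬝ᵥ A⁻¹.mulVec b := by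
        rw [dotProduct_comm, hc]
      rw [Matrix.mulVec_sub, Matrix.mulVec_smul, hAc, sub_dotProduct,
        smul_dotProduct, dotProduct_sub, dotProduct_sub,
        dotProduct_smul, dotProduct_smul, h1, h3,
        dotProduct_comm z b]
      simp only [smul_eq_mul]; ring
    rw [expand] at h0; linarith
  have hd := discrim_le_zero key
  unfold discrim at hd
  nlinarith [hd]

lemma MCT.entry_dot {n : ℕ} (B : Matrix (Fin n) (Fin n) ℝ) (w x : Fin n → ℝ) :
    ∑ j, (∑ i, w i * B i j) * x j = w ⬝ᵥ B.mulVec x := by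
  simp only [dotProduct, Matrix.mulVec, Finset.mul_sum, Finset.sum_mul]
  rw [Finset.sum_comm]
  exact Finset.sum_congr rfl fun i _ => Finset.sum_congr rfl fun j _ => by ring

lemma MCT.det_rank2 {n : ℕ} (hn : 2 ≤ n) (A : Matrix (Fin n) (Fin n) ℝ) (hdet : IsUnit A.det)
    (u v : Fin n → ℝ) (ρ ρ0 ρ1 σ : ℝ) (hρ : ρ ≠ 0) :
    (Matrix.of fun i j => ρ * A i j + ρ0 * u i * u j + ρ1 * (u i * v j + v i * u j)
        - σ * ρ1 * v i * v j).det
      = A.det * ρ ^ (n - 2) *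
        ((ρ + ((u ⬝ᵥ A⁻¹.mulVec u) * ρ0 + (u ⬝ᵥ A⁻¹.mulVec v) * ρ1))
            * (ρ + ((v ⬝ᵥ A⁻¹.mulVec u) * ρ1 + (v ⬝ᵥ A⁻¹.mulVec v) * (-(σ * ρ1))))
          - ((u ⬝ᵥ A⁻¹.mulVec u) * ρ1 + (u ⬝ᵥ A⁻¹.mulVec v) * (-(σ * ρ1)))
            * ((v ⬝ᵥ A⁻¹.mulVec u) * ρ0 + (v ⬝ᵥ A⁻¹.mulVec v) * ρ1)) := by
  set P : Matrix (Fin n) (Fin 2) ℝ := Matrix.of fun i k => if k = 0 then u i else v i with hP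
  set C : Matrix (Fin 2) (Fin 2) ℝ := !![ρ0, ρ1; ρ1, -(σ * ρ1)] with hC
  set Q : Matrix (Fin 2) (Fin 2) ℝ := Pᵀ * A⁻¹ * P with hQ
  have hQ00 : Q 0 0 = u ⬝ᵥ A⁻¹.mulVec u := by
    rw [hQ, Matrix.mul_apply]
    simp only [Matrix.mul_apply, Matrix.transpose_apply, hP, Matrix.of_apply, if_pos rfl]
    exact MCT.entry_dot A⁻¹ u u
  have hQ01 : Q 0 1 = u ⬝ᵥ A⁻¹.mulVec v := by
    rw [hQ, Matrix.mul_apply]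
    simp only [Matrix.mul_apply, Matrix.transpose_apply, hP, Matrix.of_apply]
    norm_num
    exact MCT.entry_dot A⁻¹ u v
  have hQ10 : Q 1 0 = v ⬝ᵥ A⁻¹.mulVec u := by
    rw [hQ, Matrix.mul_apply]
    simp only [Matrix.mul_apply, Matrix.transpose_apply, hP, Matrix.of_apply]
    norm_num
    exact MCT.entry_dot A⁻¹ v u
  have hQ11 : Q 1 1 = v ⬝ᵥ A⁻¹.mulVec v := by
    rw [hQ, Matrix.mul_apply]
    simp only [Matrix.mul_apply, Matrix.transpose_apply, hP, Matrix.of_apply]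
    norm_num
    exact MCT.entry_dot A⁻¹ v v
  have h2 : (Matrix.of fun i j => ρ * A i j + ρ0 * u i * u j + ρ1 * (u i * v j + v i * u j)
      - σ * ρ1 * v i * v j) = ρ • A + (P * C) * Pᵀ := by
    ext i j
    simp only [Matrix.of_apply, Matrix.add_apply, Matrix.smul_apply, smul_eq_mul,
      Matrix.mul_apply, Fin.sum_univ_two, Matrix.transpose_apply, hP, hC, Matrix.of_apply]
    norm_num [Matrix.cons_val_zero, Matrix.cons_val_one]
    ring
  have h1 : A * (ρ • 1 + A⁻¹ * ((P * C) * Pᵀ)) = ρ • A + (P * C) * Pᵀ := by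
    rw [Matrix.mul_add, mul_smul_comm, Matrix.mul_one, ← Matrix.mul_assoc,
      Matrix.mul_nonsing_inv A hdet, Matrix.one_mul]
  rw [h2, ← h1, Matrix.det_mul]
  have h3 : ρ • (1 : Matrix (Fin n) (Fin n) ℝ) + A⁻¹ * ((P * C) * Pᵀ)
      = ρ • (1 + (A⁻¹ * (P * C)) * (ρ⁻¹ • Pᵀ)) := by
    rw [smul_add, Matrix.mul_smul, smul_smul, mul_inv_cancel₀ hρ, one_smul]
    simp [Matrix.mul_assoc]
  rw [h3, Matrix.det_smul, Matrix.det_one_add_mul_comm]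
  have h4 : (1 : Matrix (Fin 2) (Fin 2) ℝ) + (ρ⁻¹ • Pᵀ) * (A⁻¹ * (P * C))
      = 1 + ρ⁻¹ • (Q * C) := by
    rw [hQ, Matrix.smul_mul]
    simp [Matrix.mul_assoc]
  rw [h4, Matrix.det_fin_two]
  simp only [Matrix.add_apply, Matrix.one_apply, Matrix.smul_apply, smul_eq_mul,
    Matrix.mul_apply, Fin.sum_univ_two, hQ00, hQ01, hQ10, hQ11]
  norm_num [hC]
  obtain ⟨m, rfl⟩ : ∃ m, n = m + 2 := ⟨n - 2, by omega⟩
  simp only [Fintype.card_fin, Nat.add_sub_cancel]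
  rw [pow_succ, pow_succ]
  field_simp

lemma MCT.hasFDerivAt_quad {n : ℕ} (A : Matrix (Fin n) (Fin n) ℝ) (y : Fin n → ℝ) :
    HasFDerivAt (fun z : Fin n → ℝ => z ⬝ᵥ A.mulVec z)
      (∑ i, (y i • (∑ jj, A i jj • (ContinuousLinearMap.proj jj
            : (Fin n → ℝ) →L[ℝ] ℝ)) + A.mulVec y i • ContinuousLinearMap.proj i)) y := by
  have hfun : (fun z : Fin n → ℝ => z ⬝ᵥ A.mulVec z)
      = fun z => ∑ i, z i * ∑ jj, A i jj * z jj := rfl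
  rw [hfun]
  refine HasFDerivAt.fun_sum fun i _ => ?_
  have hrow : HasFDerivAt (fun z : Fin n → ℝ => ∑ jj, A i jj * z jj)
      (∑ jj, A i jj • (ContinuousLinearMap.proj jj : (Fin n → ℝ) →L[ℝ] ℝ)) y :=
    HasFDerivAt.fun_sum fun jj _ => (hasFDerivAt_apply jj y).const_mul (A i jj)
  have h2 := (hasFDerivAt_apply i y).mul hrow
  have hmv : (∑ jj, A i jj * y jj) = A.mulVec y i := rfl
  rw [hmv] at h2
  exact h2

lemma MCT.hasFDerivAt_beta {n : ℕ} (b y : Fin n → ℝ) :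
    HasFDerivAt (fun z : Fin n → ℝ => betaFn b z)
      (∑ i, b i • (ContinuousLinearMap.proj i : (Fin n → ℝ) →L[ℝ] ℝ)) y := by
  have hfun : (fun z : Fin n → ℝ => betaFn b z) = fun z => ∑ i, b i * z i := rfl
  rw [hfun]
  exact HasFDerivAt.fun_sum fun i _ => (hasFDerivAt_apply i y).const_mul (b i)

set_option maxHeartbeats 1000000 in
set_option maxHeartbeats 1000000 in
set_option maxHeartbeats 1000000 in
theorem mean_cartan_torsion_formula (n : ℕ) (hn : 2 ≤ n)
    (A : Matrix (Fin n) (Fin n) ℝ) (hA : A.PosDef) (b : Fin n → ℝ)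
    (φ : ℝ → ℝ → ℝ) (hφ : ContDiff ℝ (⊤ : ℕ∞) (Function.uncurry φ))
    (hpos : ∀ s b' : ℝ, |s| ≤ b' → b' ≤ Real.sqrt (bsq A b) →
      0 < φ (b' ^ 2) s ∧
      0 < φ (b' ^ 2) s - s * phi2 φ (b' ^ 2) s ∧
      0 < φ (b' ^ 2) s - s * phi2 φ (b' ^ 2) s
          + (b' ^ 2 - s ^ 2) * phi22 φ (b' ^ 2) s)
    (y : Fin n → ℝ) (hy : y ≠ 0) (j : Fin n) :
    fderiv ℝ (fun z => Real.log (Real.sqrt (gmat A b φ z).det)) y (Pi.single j 1) =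
      (let s := betaFn b y / alphaFn A y
       let t := bsq A b
       let p := φ t s
       let p2 := phi2 φ t s
       let p22 := phi22 φ t s
       let p222 := phi222 φ t s
       let l : Fin n → ℝ := fun k => A.mulVec y k / alphaFn A y
       (1 / (2 * alphaFn A y)) *
         (((n : ℝ) + 1) * p2 / p - ((n : ℝ) - 2) * s * p22 / (p - s * p2)
           + ((t - s ^ 2) * p222 - 3 * s * p22)
             / (p - s * p2 + (t - s ^ 2) * p22)) *
         (b j - s * l j)) := by
  obtain ⟨m, rfl⟩ : ∃ m, n = m + 2 := ⟨n - 2, by omega⟩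
  clear hn
  have hdetpos := hA.det_pos
  have hdetne : A.det ≠ 0 := hdetpos.ne'
  have hdet : IsUnit A.det := isUnit_iff_ne_zero.mpr hdetne
  set t := bsq A b with ht
  have ht0 : 0 ≤ t := hA.inv.posSemidef.dotProduct_mulVec_nonneg b
  have hsq : Real.sqrt t ^ 2 = t := Real.sq_sqrt ht0
  have hq0 : ∀ z : Fin (m + 2) → ℝ, z ≠ 0 → 0 < z ⬝ᵥ A.mulVec z := fun z hz => hA.dotProduct_mulVec_pos hz
  have hαpos : ∀ z : Fin (m + 2) → ℝ, z ≠ 0 → 0 < alphaFn A z := fun z hz =>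
    Real.sqrt_pos.mpr (hq0 z hz)
  have habs : ∀ z : Fin (m + 2) → ℝ, z ≠ 0 →
      |betaFn b z / alphaFn A z| ≤ Real.sqrt t := by
    intro z hz
    have hα := hαpos z hz
    have h1 : (betaFn b z) ^ 2 ≤ t * (z ⬝ᵥ A.mulVec z) := MCT.cauchy hA b z
    have h2 : |betaFn b z| ≤ Real.sqrt t * alphaFn A z := by
      rw [← Real.sqrt_sq_eq_abs]
      calc Real.sqrt ((betaFn b z) ^ 2) ≤ Real.sqrt (t * (z ⬝ᵥ A.mulVec z)) :=
            Real.sqrt_le_sqrt h1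
        _ = Real.sqrt t * alphaFn A z := Real.sqrt_mul ht0 _
    rw [abs_div, abs_of_pos hα, div_le_iff₀ hα]
    exact h2
  have hposz : ∀ z : Fin (m + 2) → ℝ, z ≠ 0 →
      0 < φ t (betaFn b z / alphaFn A z) ∧
      0 < φ t (betaFn b z / alphaFn A z) - (betaFn b z / alphaFn A z) * phi2 φ t (betaFn b z / alphaFn A z) ∧
      0 < φ t (betaFn b z / alphaFn A z) - (betaFn b z / alphaFn A z) * phi2 φ t (betaFn b z / alphaFn A z) + (t - (betaFn b z / alphaFn A z) ^ 2) * phi22 φ t (betaFn b z / alphaFn A z) := by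
    intro z hz
    have := hpos (betaFn b z / alphaFn A z) (Real.sqrt t) (habs z hz) le_rfl
    rwa [hsq] at this
  have hdetg : ∀ z : Fin (m + 2) → ℝ, z ≠ 0 → (gmat A b φ z).det
      = A.det * ((φ t (betaFn b z / alphaFn A z)) ^ (m + 3) * ((φ t (betaFn b z / alphaFn A z) - (betaFn b z / alphaFn A z) * phi2 φ t (betaFn b z / alphaFn A z)) ^ m * (φ t (betaFn b z / alphaFn A z) - (betaFn b z / alphaFn A z) * phi2 φ t (betaFn b z / alphaFn A z) + (t - (betaFn b z / alphaFn A z) ^ 2) * phi22 φ t (betaFn b z / alphaFn A z)))) := by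
    intro z hz
    obtain ⟨hp1, hp2, hp3⟩ := hposz z hz
    have hα := hαpos z hz
    have hq := hq0 z hz
    have hρ : (φ t (betaFn b z / alphaFn A z) * (φ t (betaFn b z / alphaFn A z) - (betaFn b z / alphaFn A z) * phi2 φ t (betaFn b z / alphaFn A z))) ≠ 0 := (mul_pos hp1 hp2).ne'
    have hg : gmat A b φ z = Matrix.of fun i j =>
        (φ t (betaFn b z / alphaFn A z) * (φ t (betaFn b z / alphaFn A z) - (betaFn b z / alphaFn A z) * phi2 φ t (betaFn b z / alphaFn A z))) * A i j + (φ t (betaFn b z / alphaFn A z) * phi22 φ t (betaFn b z / alphaFn A z) + phi2 φ t (betaFn b z / alphaFn A z) ^ 2) * b i * b j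
          + ((φ t (betaFn b z / alphaFn A z) - (betaFn b z / alphaFn A z) * phi2 φ t (betaFn b z / alphaFn A z)) * phi2 φ t (betaFn b z / alphaFn A z) - (betaFn b z / alphaFn A z) * φ t (betaFn b z / alphaFn A z) * phi22 φ t (betaFn b z / alphaFn A z)) * (b i * (fun k => A.mulVec z k / alphaFn A z) j
              + (fun k => A.mulVec z k / alphaFn A z) i * b j)
          - (betaFn b z / alphaFn A z) * ((φ t (betaFn b z / alphaFn A z) - (betaFn b z / alphaFn A z) * phi2 φ t (betaFn b z / alphaFn A z)) * phi2 φ t (betaFn b z / alphaFn A z) - (betaFn b z / alphaFn A z) * φ t (betaFn b z / alphaFn A z) * phi22 φ t (betaFn b z / alphaFn A z)) * (fun k => A.mulVec z k / alphaFn A z) i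
              * (fun k => A.mulVec z k / alphaFn A z) j := by
      ext i j
      show ((φ t (betaFn b z / alphaFn A z) * (φ t (betaFn b z / alphaFn A z) - (betaFn b z / alphaFn A z) * phi2 φ t (betaFn b z / alphaFn A z))) * A i j + (φ t (betaFn b z / alphaFn A z) * phi22 φ t (betaFn b z / alphaFn A z) + phi2 φ t (betaFn b z / alphaFn A z) ^ 2) * b i * b j
          + ((φ t (betaFn b z / alphaFn A z) - (betaFn b z / alphaFn A z) * phi2 φ t (betaFn b z / alphaFn A z)) * phi2 φ t (betaFn b z / alphaFn A z) - (betaFn b z / alphaFn A z) * φ t (betaFn b z / alphaFn A z) * phi22 φ t (betaFn b z / alphaFn A z)) * (b i * ((fun k => A.mulVec z k / alphaFn A z) j)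
              + b j * ((fun k => A.mulVec z k / alphaFn A z) i))
          - (betaFn b z / alphaFn A z) * ((φ t (betaFn b z / alphaFn A z) - (betaFn b z / alphaFn A z) * phi2 φ t (betaFn b z / alphaFn A z)) * phi2 φ t (betaFn b z / alphaFn A z) - (betaFn b z / alphaFn A z) * φ t (betaFn b z / alphaFn A z) * phi22 φ t (betaFn b z / alphaFn A z)) * ((fun k => A.mulVec z k / alphaFn A z) i)
              * ((fun k => A.mulVec z k / alphaFn A z) j)) = _
      simp only [Matrix.of_apply]
      ring
    have hayval : (fun k => A.mulVec z k / alphaFn A z) = (alphaFn A z)⁻¹ • A.mulVec z := by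
      funext k
      simp [div_eq_inv_mul]
    have hinvay : A⁻¹.mulVec (fun k => A.mulVec z k / alphaFn A z) = (alphaFn A z)⁻¹ • z := by
      rw [hayval, Matrix.mulVec_smul, Matrix.mulVec_mulVec,
        Matrix.nonsing_inv_mul A hdet, Matrix.one_mulVec]
    have e1 : b ⬝ᵥ A⁻¹.mulVec b = t := rfl
    have e2 : b ⬝ᵥ A⁻¹.mulVec (fun k => A.mulVec z k / alphaFn A z)
        = betaFn b z / alphaFn A z := by
      rw [hinvay, dotProduct_smul, smul_eq_mul]
      unfold betaFn
      rw [div_eq_inv_mul]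
    have e3 : (fun k => A.mulVec z k / alphaFn A z) ⬝ᵥ A⁻¹.mulVec b
        = betaFn b z / alphaFn A z := by
      rw [MCT.dot_symm hA.inv.1]; exact e2
    have e4 : (fun k => A.mulVec z k / alphaFn A z) ⬝ᵥ
        A⁻¹.mulVec (fun k => A.mulVec z k / alphaFn A z) = 1 := by
      rw [hinvay, dotProduct_smul, smul_eq_mul, hayval,
        smul_dotProduct, smul_eq_mul, dotProduct_comm]
      have hzz : z ⬝ᵥ A.mulVec z = alphaFn A z ^ 2 := (Real.sq_sqrt hq.le).symm
      rw [hzz, pow_two]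
      field_simp
    rw [hg, MCT.det_rank2 (by omega) A hdet b (fun k => A.mulVec z k / alphaFn A z)
      (φ t (betaFn b z / alphaFn A z) * (φ t (betaFn b z / alphaFn A z) - (betaFn b z / alphaFn A z) * phi2 φ t (betaFn b z / alphaFn A z))) (φ t (betaFn b z / alphaFn A z) * phi22 φ t (betaFn b z / alphaFn A z) + phi2 φ t (betaFn b z / alphaFn A z) ^ 2) ((φ t (betaFn b z / alphaFn A z) - (betaFn b z / alphaFn A z) * phi2 φ t (betaFn b z / alphaFn A z)) * phi2 φ t (betaFn b z / alphaFn A z) - (betaFn b z / alphaFn A z) * φ t (betaFn b z / alphaFn A z) * phi22 φ t (betaFn b z / alphaFn A z)) (betaFn b z / alphaFn A z) hρ, e1, e2, e3, e4]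
    simp only [Nat.add_sub_cancel]
    rw [show (φ t (betaFn b z / alphaFn A z) * (φ t (betaFn b z / alphaFn A z) - (betaFn b z / alphaFn A z) * phi2 φ t (betaFn b z / alphaFn A z))) ^ m = (φ t (betaFn b z / alphaFn A z)) ^ m * (φ t (betaFn b z / alphaFn A z) - (betaFn b z / alphaFn A z) * phi2 φ t (betaFn b z / alphaFn A z)) ^ m from mul_pow _ _ _, pow_add]
    ring
  have hmem : {z : Fin (m + 2) → ℝ | z ≠ 0} ∈ nhds y :=
    IsOpen.mem_nhds isOpen_ne hy
  have heq : (fun z => Real.log (Real.sqrt (gmat A b φ z).det)) =ᶠ[nhds y]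
      (fun z => (Real.log A.det
        + ((m + 3 : ℕ) : ℝ) * Real.log (φ t (betaFn b z / alphaFn A z))
        + (((m : ℕ) : ℝ) * Real.log (φ t (betaFn b z / alphaFn A z) - (betaFn b z / alphaFn A z) * phi2 φ t (betaFn b z / alphaFn A z))
          + Real.log (φ t (betaFn b z / alphaFn A z) - (betaFn b z / alphaFn A z) * phi2 φ t (betaFn b z / alphaFn A z) + (t - (betaFn b z / alphaFn A z) ^ 2) * phi22 φ t (betaFn b z / alphaFn A z)))) / 2) := by
    filter_upwards [hmem] with z hz
    obtain ⟨hp1, hp2, hp3⟩ := hposz z hz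
    have hX1 : (0:ℝ) < (φ t (betaFn b z / alphaFn A z)) ^ (m + 3) := pow_pos hp1 _
    have hX2 : (0:ℝ) < (φ t (betaFn b z / alphaFn A z) - (betaFn b z / alphaFn A z) * phi2 φ t (betaFn b z / alphaFn A z)) ^ m := pow_pos hp2 _
    rw [hdetg z hz, Real.log_sqrt (mul_pos hdetpos (mul_pos hX1 (mul_pos hX2 hp3))).le,
      Real.log_mul hdetne (mul_pos hX1 (mul_pos hX2 hp3)).ne',
      Real.log_mul hX1.ne' (mul_pos hX2 hp3).ne',
      Real.log_mul hX2.ne' hp3.ne', Real.log_pow, Real.log_pow]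
    ring
  rw [Filter.EventuallyEq.fderiv_eq heq]
  obtain ⟨h1, h2, h3⟩ := hposz y hy
  have hαy := hαpos y hy
  have hqy := hq0 y hy
  have hβ := MCT.hasFDerivAt_beta b y
  have hqd := MCT.hasFDerivAt_quad A y
  have hα : HasFDerivAt (fun z => alphaFn A z)
      ((1 / (2 * Real.sqrt (y ⬝ᵥ A.mulVec y))) •
        (∑ i, (y i • (∑ jj, A i jj • (ContinuousLinearMap.proj jj
            : (Fin (m + 2) → ℝ) →L[ℝ] ℝ)) + A.mulVec y i • ContinuousLinearMap.proj i)))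
      y := (Real.hasDerivAt_sqrt hqy.ne').comp_hasFDerivAt y hqd
  have hinv := (hasDerivAt_inv hαy.ne').comp_hasFDerivAt y hα
  have hsmul := hβ.mul hinv
  have hsdiv : HasFDerivAt (fun z => betaFn b z / alphaFn A z)
      (betaFn b y • ((-((alphaFn A y) ^ 2)⁻¹) •
          ((1 / (2 * Real.sqrt (y ⬝ᵥ A.mulVec y))) •
            (∑ i, (y i • (∑ jj, A i jj • (ContinuousLinearMap.proj jj
                : (Fin (m + 2) → ℝ) →L[ℝ] ℝ)) + A.mulVec y i • ContinuousLinearMap.proj i))))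
        + (alphaFn A y)⁻¹ • (∑ i, b i • (ContinuousLinearMap.proj i
            : (Fin (m + 2) → ℝ) →L[ℝ] ℝ))) y := by
    simp only [div_eq_mul_inv]
    exact hsmul
  have sm0 : ContDiff ℝ (⊤ : ℕ∞) (φ t) := by
    have : ContDiff ℝ (⊤ : ℕ∞) (fun σ : ℝ => Function.uncurry φ (t, σ)) :=
      hφ.comp (contDiff_const.prodMk contDiff_id)
    exact this.of_le (by simp)
  have sm1 : ContDiff ℝ (⊤ : ℕ∞) (phi2 φ t) := by
    have := sm0.iterate_deriv 1
    rwa [Function.iterate_one] at this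
  have sm2 : ContDiff ℝ (⊤ : ℕ∞) (phi22 φ t) := by
    have := sm1.iterate_deriv 1
    rwa [Function.iterate_one] at this
  have hd1 : HasDerivAt (φ t) (phi2 φ t (betaFn b y / alphaFn A y)) (betaFn b y / alphaFn A y) :=
    ((sm0.differentiable (by simp)) _).hasDerivAt
  have hd2 : HasDerivAt (phi2 φ t) (phi22 φ t (betaFn b y / alphaFn A y)) (betaFn b y / alphaFn A y) :=
    ((sm1.differentiable (by simp)) _).hasDerivAt
  have hd3 : HasDerivAt (phi22 φ t) (phi222 φ t (betaFn b y / alphaFn A y)) (betaFn b y / alphaFn A y) :=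
    ((sm2.differentiable (by simp)) _).hasDerivAt
  have hψ := hd1.sub ((hasDerivAt_id' (betaFn b y / alphaFn A y)).mul hd2)
  have hχ := hψ.add (((hasDerivAt_const (betaFn b y / alphaFn A y) t).sub (hasDerivAt_pow 2 (betaFn b y / alphaFn A y))).mul hd3)
  have hG := ((((hasDerivAt_const (betaFn b y / alphaFn A y) (Real.log A.det)).add
      ((hd1.log h1.ne').const_mul ((m + 3 : ℕ) : ℝ))).add
      (((hψ.log h2.ne').const_mul ((m : ℕ) : ℝ)).add (hχ.log h3.ne'))).div_const 2)
  have hH := hG.comp_hasFDerivAt y hsdiv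
  change HasFDerivAt (fun z => (Real.log A.det
        + ((m + 3 : ℕ) : ℝ) * Real.log (φ t (betaFn b z / alphaFn A z))
        + (((m : ℕ) : ℝ) * Real.log (φ t (betaFn b z / alphaFn A z) - (betaFn b z / alphaFn A z) * phi2 φ t (betaFn b z / alphaFn A z))
          + Real.log (φ t (betaFn b z / alphaFn A z) - (betaFn b z / alphaFn A z) * phi2 φ t (betaFn b z / alphaFn A z) + (t - (betaFn b z / alphaFn A z) ^ 2) * phi22 φ t (betaFn b z / alphaFn A z)))) / 2) _ y at hH
  rw [hH.fderiv]
  simp only [ContinuousLinearMap.add_apply, ContinuousLinearMap.smul_apply,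
    ContinuousLinearMap.coe_sum', Finset.sum_apply, ContinuousLinearMap.proj_apply,
    smul_eq_mul, Pi.single_apply, mul_ite, mul_one, mul_zero, Finset.sum_ite_eq',
    Finset.mem_univ, if_true, Pi.sub_apply, Pi.add_apply, Pi.mul_apply]
  have hsum : (∑ x : Fin (m + 2), (y x * A x j + if x = j then (A *ᵥ y) x else 0))
      = 2 * A.mulVec y j := by
    rw [Finset.sum_add_distrib]
    have e1 : (∑ x : Fin (m + 2), y x * A x j) = A.mulVec y j := by
      simp only [Matrix.mulVec, dotProduct]
      exact Finset.sum_congr rfl fun i _ => by rw [MCT.herm_symm hA.1 j i]; ring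
    have e2 : (∑ x : Fin (m + 2), if x = j then (A *ᵥ y) x else 0) = A.mulVec y j := by
      simp
    rw [e1, e2]; ring
  rw [hsum]
  rw [show Real.sqrt (y ⬝ᵥ A.mulVec y) = alphaFn A y from rfl]
  generalize hσ : betaFn b y / alphaFn A y = σ₀
  rw [hσ] at h1 h2 h3
  rw [← div_mul_cancel₀ (betaFn b y) hαy.ne', hσ]
  push_cast
  field_simp
  ring
end
end
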